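/- arXiv:1209.0368 — 2 statements merged into one kernel-verified Lean document; each statement's English description precedes it below -/
import Mathlib

section
/- For any λ > 0, the proximity operator of λΩ^G_p equals the identity minus the projection onto λK: prox_{λΩ^G_p}(x) = x − π_{λK}(x) for all x ∈ ℝ^d, where K = { u ∈ ℝ^d : ‖P_r u‖_q ≤ 1, r = 1,...,B }. -/
/-!
For `w` in `λK`, Hölder's inequality on each group of a decomposition of `u` gives
`⟨w, u⟩ ≤ λ Ω(u)`. Conversely, separating `u` from the compact convex image of the
decompositions of cost at most `c` shows that `λ Ω(u) ≤ t` as soon as `⟨u, w⟩ ≤ t` on `λK`: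
`Ω` is the support function of `K`. For the projection `y` of `x` onto `λK`, the variational
inequality `⟨x - y, w - y⟩ ≤ 0` on `λK` therefore gives `λ Ω(x - y) = ⟨x - y, y⟩`, and expanding
`½‖u - x‖²` around `x - y` yields `F(u) ≥ F(x - y) + ½‖u - (x - y)‖²` for `F = ½‖· - x‖² + λ Ω`.
-/

open scoped Classical ENNReal NNReal

noncomputable def pNormOn (p : ℝ≥0∞) [Fact (1 ≤ p)] {ι : Type*} [Fintype ι] (v : ι → ℝ) : ℝ :=
  ‖(WithLp.equiv p (ι → ℝ)).symm v‖

noncomputable def grpNorm {d : ℕ} (p : ℝ≥0∞) [Fact (1 ≤ p)] (G : Finset (Fin d))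
    (x : Fin d → ℝ) : ℝ :=
  pNormOn p (fun j : {j : Fin d // j ∈ G} => x j.1)

def embed {d : ℕ} (G : Finset (Fin d)) (v : {j : Fin d // j ∈ G} → ℝ) : Fin d → ℝ :=
  fun j => if h : j ∈ G then v ⟨j, h⟩ else 0

noncomputable def Omega {d B : ℕ} (p : ℝ≥0∞) [Fact (1 ≤ p)] (G : Fin B → Finset (Fin d))
    (x : Fin d → ℝ) : ℝ :=
  sInf { s | ∃ v : (r : Fin B) → {j : Fin d // j ∈ G r} → ℝ,
    (∑ r, embed (G r) (v r)) = x ∧ s = ∑ r, pNormOn p (v r) }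

noncomputable def nrm2 {d : ℕ} (x : Fin d → ℝ) : ℝ := Real.sqrt (∑ j, (x j) ^ 2)

open Finset

section PNorm
variable {p q : ℝ≥0∞} [Fact (1 ≤ p)] [Fact (1 ≤ q)] {ι : Type*} [Fintype ι]

lemma pNormOn_eq_norm (v : ι → ℝ) : pNormOn p v = ‖WithLp.toLp p v‖ := rfl

lemma pNormOn_nonneg (v : ι → ℝ) : 0 ≤ pNormOn p v := norm_nonneg _

@[simp] lemma pNormOn_zero : pNormOn p (0 : ι → ℝ) = 0 := by
  simp [pNormOn_eq_norm]

lemma pNormOn_add_le (v w : ι → ℝ) : pNormOn p (v + w) ≤ pNormOn p v + pNormOn p w := by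
  simpa [pNormOn_eq_norm] using norm_add_le (WithLp.toLp p v) (WithLp.toLp p w)

lemma pNormOn_smul (c : ℝ) (v : ι → ℝ) : pNormOn p (c • v) = |c| * pNormOn p v := by
  simp [pNormOn_eq_norm, WithLp.toLp_smul, norm_smul]

lemma continuous_pNormOn : Continuous (pNormOn p : (ι → ℝ) → ℝ) :=
  (PiLp.continuous_toLp p _).norm

lemma pNormOn_eq_rpow_sum (hp : p ≠ ∞) (v : ι → ℝ) :
    pNormOn p v = (∑ i, |v i| ^ p.toReal) ^ (1 / p.toReal) := by
  have hp0 : 0 < p.toReal :=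
    ENNReal.toReal_pos (zero_lt_one.trans_le (Fact.out : (1 : ℝ≥0∞) ≤ p)).ne' hp
  simp [pNormOn_eq_norm, PiLp.norm_eq_sum hp0]

lemma pNormOn_top (v : ι → ℝ) : pNormOn ∞ v = ⨆ i, |v i| := by
  simp [pNormOn_eq_norm, PiLp.norm_eq_ciSup]

lemma pNormOn_one (v : ι → ℝ) : pNormOn 1 v = ∑ i, |v i| := by
  simp [pNormOn_eq_norm, PiLp.norm_eq_of_L1]

lemma abs_le_pNormOn (v : ι → ℝ) (i : ι) : |v i| ≤ pNormOn p v := by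
  simpa [pNormOn_eq_norm] using PiLp.norm_apply_le (WithLp.toLp p v) i

lemma abs_sign_le_one (x : ℝ) : |(SignType.sign x : ℝ)| ≤ 1 := by
  cases SignType.sign x <;> simp

lemma dotProduct_le_pNormOn_top_mul_pNormOn_one (v w : ι → ℝ) :
    v ⬝ᵥ w ≤ pNormOn ∞ v * pNormOn 1 w := by
  rw [pNormOn_one, mul_sum]
  refine sum_le_sum fun i _ => ?_
  calc v i * w i ≤ |v i| * |w i| := by rw [← abs_mul]; exact le_abs_self _
    _ ≤ pNormOn ∞ v * |w i| := by gcongr; exact abs_le_pNormOn v i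

lemma dotProduct_le_pNormOn_mul_pNormOn [p.HolderConjugate q] (v w : ι → ℝ) :
    v ⬝ᵥ w ≤ pNormOn p v * pNormOn q w := by
  by_cases hp : p = ∞
  · obtain rfl := hp
    obtain rfl := (ENNReal.HolderConjugate.eq_top_iff_eq_one ∞ q).mp rfl
    exact dotProduct_le_pNormOn_top_mul_pNormOn_one v w
  by_cases hq : q = ∞
  · obtain rfl := hq
    obtain rfl := (ENNReal.HolderConjugate.eq_top_iff_eq_one ∞ p).mp rfl
    rw [dotProduct_comm, mul_comm]
    exact dotProduct_le_pNormOn_top_mul_pNormOn_one w v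
  rw [pNormOn_eq_rpow_sum hp, pNormOn_eq_rpow_sum hq]
  exact Real.inner_le_Lp_mul_Lq _ v w (ENNReal.HolderConjugate.toReal_of_ne_top hp hq)

lemma exists_pNormOn_top_le_one_dotProduct_eq (w : ι → ℝ) :
    ∃ v : ι → ℝ, pNormOn ∞ v ≤ 1 ∧ v ⬝ᵥ w = pNormOn 1 w := by
  refine ⟨fun i => SignType.sign (w i), ?_, ?_⟩
  · rw [pNormOn_top]
    exact Real.iSup_le (fun i => abs_sign_le_one (w i)) zero_le_one
  · simp [dotProduct, pNormOn_one, sign_mul_self]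

lemma exists_pNormOn_one_le_one_dotProduct_eq (w : ι → ℝ) :
    ∃ v : ι → ℝ, pNormOn 1 v ≤ 1 ∧ v ⬝ᵥ w = pNormOn ∞ w := by
  rcases isEmpty_or_nonempty ι with hι | hι
  · exact ⟨0, by simp, by simp [pNormOn_top]⟩
  obtain ⟨i₀, hi₀⟩ := Finite.exists_max fun i => |w i|
  refine ⟨Pi.single i₀ (SignType.sign (w i₀)), ?_, ?_⟩
  · rw [pNormOn_one, sum_eq_single i₀ (fun i _ hi => by simp [hi]) (by simp)]
    simpa using abs_sign_le_one (w i₀)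
  · rw [single_dotProduct, sign_mul_self, pNormOn_top]
    exact le_antisymm (le_ciSup (f := fun i => |w i|) (Finite.bddAbove_range _) i₀)
      (ciSup_le hi₀)

lemma exists_pNormOn_le_one_dotProduct_eq [p.HolderConjugate q] (w : ι → ℝ) :
    ∃ v : ι → ℝ, pNormOn p v ≤ 1 ∧ v ⬝ᵥ w = pNormOn q w := by
  by_cases hp : p = ∞
  · obtain rfl := hp
    obtain rfl := (ENNReal.HolderConjugate.eq_top_iff_eq_one ∞ q).mp rfl
    exact exists_pNormOn_top_le_one_dotProduct_eq w
  by_cases hq : q = ∞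
  · obtain rfl := hq
    obtain rfl := (ENNReal.HolderConjugate.eq_top_iff_eq_one ∞ p).mp rfl
    exact exists_pNormOn_one_le_one_dotProduct_eq w
  have hpq := ENNReal.HolderConjugate.toReal_of_ne_top hp hq
  obtain ⟨⟨g, hg, hgw⟩, -⟩ := NNReal.isGreatest_Lp univ (fun i => ‖w i‖₊) hpq.symm
  simp only [Set.mem_ofPred_eq] at hg
  refine ⟨fun i => SignType.sign (w i) * g i, ?_, ?_⟩
  · have habs : ∀ i, |SignType.sign (w i) * (g i : ℝ)| ≤ g i := fun i => by
      rw [abs_mul, NNReal.abs_eq]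
      exact mul_le_of_le_one_left (g i).2 (abs_sign_le_one _)
    rw [pNormOn_eq_rpow_sum hp]
    refine Real.rpow_le_one (by positivity) ?_ (by positivity)
    calc ∑ i, |SignType.sign (w i) * (g i : ℝ)| ^ p.toReal ≤ ∑ i, (g i : ℝ) ^ p.toReal :=
          sum_le_sum fun i _ => Real.rpow_le_rpow (abs_nonneg _) (habs i) ENNReal.toReal_nonneg
      _ ≤ 1 := by exact_mod_cast hg
  · rw [pNormOn_eq_rpow_sum hq]
    have := congrArg (fun x : ℝ≥0 => (x : ℝ)) hgw
    push_cast [Real.norm_eq_abs] at this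
    rw [← this]
    refine sum_congr rfl fun i _ => ?_
    rw [mul_right_comm, sign_mul_self, mul_comm]

end PNorm

section Compactness
variable {p : ℝ≥0∞} [Fact (1 ≤ p)] {κ : Type*} [Fintype κ] {ι : κ → Type*} [∀ r, Fintype (ι r)]

lemma isCompact_sum_pNormOn_le (c : ℝ) :
    IsCompact {v : (r : κ) → ι r → ℝ | ∑ r, pNormOn p (v r) ≤ c} := by
  refine Metric.isCompact_of_isClosed_isBounded
    (isClosed_le (continuous_finsetSum _ fun r _ => continuous_pNormOn.comp (continuous_apply r))
      continuous_const) (isBounded_iff_forall_norm_le.2 ⟨c, fun v hv => ?_⟩)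
  have hle : ∀ r, pNormOn p (v r) ≤ c := fun r =>
    (single_le_sum (fun r _ => pNormOn_nonneg (v r)) (mem_univ r)).trans hv
  have hc : 0 ≤ c := (sum_nonneg fun r _ => pNormOn_nonneg (v r)).trans hv
  refine (pi_norm_le_iff_of_nonneg hc).2 fun r => (pi_norm_le_iff_of_nonneg hc).2 fun i => ?_
  exact (Real.norm_eq_abs _ ▸ abs_le_pNormOn (v r) i).trans (hle r)

lemma convex_sum_pNormOn_le (c : ℝ) :
    Convex ℝ {v : (r : κ) → ι r → ℝ | ∑ r, pNormOn p (v r) ≤ c} := by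
  intro v hv w hw a b ha hb hab
  calc ∑ r, pNormOn p (a • v r + b • w r)
      ≤ ∑ r, (a * pNormOn p (v r) + b * pNormOn p (w r)) := sum_le_sum fun r _ => by
        simpa [pNormOn_smul, abs_of_nonneg ha, abs_of_nonneg hb] using
          pNormOn_add_le (p := p) (a • v r) (b • w r)
    _ ≤ a * c + b * c := by
      rw [sum_add_distrib, ← mul_sum, ← mul_sum]
      exact add_le_add (mul_le_mul_of_nonneg_left hv ha) (mul_le_mul_of_nonneg_left hw hb)
    _ = c := by rw [← add_mul, hab, one_mul]

end Compactness

section Groups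
variable {p q : ℝ≥0∞} [Fact (1 ≤ p)] [Fact (1 ≤ q)] {d B : ℕ} {G : Fin B → Finset (Fin d)}

-- The set `λK` of the paper.
def dualBall (q : ℝ≥0∞) [Fact (1 ≤ q)] (G : Fin B → Finset (Fin d)) (lam : ℝ) :
    Set (Fin d → ℝ) :=
  {w | ∀ r, grpNorm q (G r) w ≤ lam}

lemma grpNorm_smul (S : Finset (Fin d)) (c : ℝ) (w : Fin d → ℝ) :
    grpNorm q S (c • w) = |c| * grpNorm q S w :=
  pNormOn_smul c _

lemma grpNorm_add_le (S : Finset (Fin d)) (v w : Fin d → ℝ) :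
    grpNorm q S (v + w) ≤ grpNorm q S v + grpNorm q S w :=
  pNormOn_add_le _ _

lemma zero_mem_dualBall {lam : ℝ} (hlam : 0 ≤ lam) : (0 : Fin d → ℝ) ∈ dualBall q G lam :=
  fun r => show pNormOn q (0 : {j // j ∈ G r} → ℝ) ≤ lam by simpa using hlam

lemma smul_mem_dualBall {c lam : ℝ} (hc : 0 ≤ c) {w : Fin d → ℝ} (hw : w ∈ dualBall q G lam) :
    c • w ∈ dualBall q G (c * lam) := fun r => by
  rw [grpNorm_smul, abs_of_nonneg hc]
  exact mul_le_mul_of_nonneg_left (hw r) hc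

lemma convex_dualBall (q : ℝ≥0∞) [Fact (1 ≤ q)] (G : Fin B → Finset (Fin d)) (lam : ℝ) :
    Convex ℝ (dualBall q G lam) := by
  intro v hv w hw a b ha hb hab r
  calc grpNorm q (G r) (a • v + b • w) ≤ grpNorm q (G r) (a • v) + grpNorm q (G r) (b • w) :=
        grpNorm_add_le _ _ _
    _ ≤ a * lam + b * lam := add_le_add (smul_mem_dualBall ha hv r) (smul_mem_dualBall hb hw r)
    _ = lam := by rw [← add_mul, hab, one_mul]

lemma embed_dotProduct (S : Finset (Fin d)) (v : {j // j ∈ S} → ℝ) (w : Fin d → ℝ) :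
    embed S v ⬝ᵥ w = v ⬝ᵥ fun j => w j := by
  rw [dotProduct, ← sum_subset (subset_univ S) fun j _ hj => by simp [embed, hj],
    ← sum_attach S]
  exact sum_congr rfl fun j _ => by simp [embed, j.2]

@[simp] lemma embed_zero (S : Finset (Fin d)) : embed S 0 = 0 := by
  ext j; simp [embed]

lemma embed_add (S : Finset (Fin d)) (v w : {j // j ∈ S} → ℝ) :
    embed S (v + w) = embed S v + embed S w := by
  ext j; by_cases h : j ∈ S <;> simp [embed, h]

lemma embed_smul (S : Finset (Fin d)) (c : ℝ) (v : {j // j ∈ S} → ℝ) :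
    embed S (c • v) = c • embed S v := by
  ext j; by_cases h : j ∈ S <;> simp [embed, h]

def groupSum (G : Fin B → Finset (Fin d)) :
    ((r : Fin B) → {j // j ∈ G r} → ℝ) →ₗ[ℝ] Fin d → ℝ where
  toFun v := ∑ r, embed (G r) (v r)
  map_add' v w := by simp only [Pi.add_apply, embed_add, sum_add_distrib]
  map_smul' c v := by simp only [Pi.smul_apply, embed_smul, RingHom.id_apply, smul_sum]

lemma groupSum_apply (v : (r : Fin B) → {j // j ∈ G r} → ℝ) :
    groupSum G v = ∑ r, embed (G r) (v r) := rfl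

lemma groupSum_single (r : Fin B) (v : {j // j ∈ G r} → ℝ) :
    groupSum G (Pi.single r v) = embed (G r) v := by
  rw [groupSum_apply, sum_eq_single r (fun r' _ h => by simp [Pi.single_eq_of_ne h]) (by simp),
    Pi.single_eq_same]

lemma exists_groupSum_eq (hcover : ∀ j : Fin d, ∃ r, j ∈ G r) (u : Fin d → ℝ) :
    ∃ v, groupSum G v = u := by
  choose f hf using hcover
  refine ⟨fun r j => if f j = r then u j else 0, funext fun j => ?_⟩
  rw [groupSum_apply, Finset.sum_apply, sum_eq_single (f j)]
  · simp [embed, hf j]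
  · intro r _ hr
    by_cases h : j ∈ G r <;> simp [embed, h, Ne.symm hr]
  · simp

lemma Omega_le_sum_pNormOn {u : Fin d → ℝ} (v : (r : Fin B) → {j // j ∈ G r} → ℝ)
    (hv : groupSum G v = u) : Omega p G u ≤ ∑ r, pNormOn p (v r) :=
  csInf_le ⟨0, by rintro _ ⟨v, -, rfl⟩; exact sum_nonneg fun r _ => pNormOn_nonneg _⟩ ⟨v, hv, rfl⟩

lemma le_Omega (hcover : ∀ j : Fin d, ∃ r, j ∈ G r) {u : Fin d → ℝ} {a : ℝ}
    (h : ∀ v, groupSum G v = u → a ≤ ∑ r, pNormOn p (v r)) : a ≤ Omega p G u := by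
  obtain ⟨v, hv⟩ := exists_groupSum_eq hcover u
  exact le_csInf ⟨_, v, hv, rfl⟩ fun _ ⟨v, hv, hs⟩ => hs ▸ h v hv

lemma dotProduct_le_mul_Omega [p.HolderConjugate q] (hcover : ∀ j : Fin d, ∃ r, j ∈ G r)
    {lam : ℝ} (hlam : 0 < lam) {w : Fin d → ℝ} (hw : w ∈ dualBall q G lam) (u : Fin d → ℝ) :
    w ⬝ᵥ u ≤ lam * Omega p G u := by
  rw [← div_le_iff₀' hlam]
  refine le_Omega hcover fun v hv => ?_
  rw [div_le_iff₀' hlam, ← hv, groupSum_apply, dotProduct_sum, mul_sum]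
  refine sum_le_sum fun r _ => ?_
  calc w ⬝ᵥ embed (G r) (v r) = v r ⬝ᵥ fun j => w j := by rw [dotProduct_comm, embed_dotProduct]
    _ ≤ pNormOn p (v r) * grpNorm q (G r) w := dotProduct_le_pNormOn_mul_pNormOn _ _
    _ ≤ lam * pNormOn p (v r) := by
      rw [mul_comm]; exact mul_le_mul_of_nonneg_right (hw r) (pNormOn_nonneg _)

lemma exists_groupSum_eq_of_dotProduct_le [p.HolderConjugate q] {c : ℝ} (hc : 0 < c)
    {u : Fin d → ℝ} (h : ∀ w ∈ dualBall q G 1, u ⬝ᵥ w ≤ c) :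
    ∃ v, groupSum G v = u ∧ ∑ r, pNormOn p (v r) ≤ c := by
  set D := {v : (r : Fin B) → {j // j ∈ G r} → ℝ | ∑ r, pNormOn p (v r) ≤ c}
  suffices u ∈ groupSum G '' D by
    obtain ⟨v, hv, rfl⟩ := this
    exact ⟨v, rfl, hv⟩
  by_contra hu
  obtain ⟨f, s, hfD, hfu⟩ := geometric_hahn_banach_closed_point
    ((convex_sum_pNormOn_le c).linear_image _)
    ((isCompact_sum_pNormOn_le c).image (groupSum G).continuous_of_finiteDimensional).isClosed hu
  set w : Fin d → ℝ := fun j => f fun k => if j = k then 1 else 0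
  have hf : ∀ a, f a = a ⬝ᵥ w := fun a => f.toLinearMap.pi_apply_eq_sum_univ a
  have hs : 0 < s := by
    simpa using hfD 0 ⟨0, by simpa [D] using hc.le, map_zero _⟩
  have hw : ∀ r, c * grpNorm q (G r) w < s := by
    intro r
    obtain ⟨v, hv, hvw⟩ :=
      exists_pNormOn_le_one_dotProduct_eq (p := p) (q := q) fun j : {j // j ∈ G r} => w j
    have hmem : embed (G r) (c • v) ∈ groupSum G '' D := by
      refine ⟨Pi.single r (c • v), ?_, groupSum_single r _⟩
      rw [Set.mem_ofPred_eq,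
        sum_eq_single r (fun r' _ h => by simp [Pi.single_eq_of_ne h]) (by simp),
        Pi.single_eq_same, pNormOn_smul, abs_of_pos hc]
      exact mul_le_of_le_one_right hc.le hv
    simpa [hf, embed_dotProduct, hvw, grpNorm] using hfD _ hmem
  have hmem : (c / s) • w ∈ dualBall q G 1 := fun r => by
    rw [grpNorm_smul, abs_of_pos (div_pos hc hs), div_mul_eq_mul_div, div_le_one hs]
    exact (hw r).le
  have hlt : c < c / s * f u := by
    rw [div_mul_eq_mul_div, lt_div_iff₀ hs]
    exact mul_lt_mul_of_pos_left hfu hc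
  have hle := h _ hmem
  rw [dotProduct_smul, smul_eq_mul, ← hf] at hle
  exact hlt.not_ge hle

lemma mul_Omega_le_of_dotProduct_le [p.HolderConjugate q] {lam : ℝ} (hlam : 0 < lam)
    {u : Fin d → ℝ} {t : ℝ} (h : ∀ w ∈ dualBall q G lam, u ⬝ᵥ w ≤ t) :
    lam * Omega p G u ≤ t := by
  have ht : 0 ≤ t := by simpa using h 0 (zero_mem_dualBall hlam.le)
  refine le_of_forall_pos_le_add fun ε hε => ?_
  obtain ⟨v, hv, hvc⟩ := exists_groupSum_eq_of_dotProduct_le (p := p) (q := q) (G := G)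
    (c := (t + ε) / lam) (by positivity) (u := u) fun w hw => by
      have := h (lam • w) (by simpa using smul_mem_dualBall hlam.le hw)
      rw [dotProduct_smul, smul_eq_mul] at this
      rw [le_div_iff₀' hlam]
      linarith
  calc lam * Omega p G u ≤ lam * ((t + ε) / lam) :=
        mul_le_mul_of_nonneg_left ((Omega_le_sum_pNormOn v hv).trans hvc) hlam.le
    _ = t + ε := mul_div_cancel₀ _ hlam.ne'

end Groups

lemma dotProduct_sub_nonpos_of_forall_le {ι : Type*} [Fintype ι] {S : Set (ι → ℝ)}
    (hS : Convex ℝ S) {x y w : ι → ℝ} (hy : y ∈ S)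
    (hmin : ∀ z ∈ S, ∑ i, (x i - y i) ^ 2 ≤ ∑ i, (x i - z i) ^ 2) (hw : w ∈ S) :
    (x - y) ⬝ᵥ (w - y) ≤ 0 := by
  by_contra! hA
  set A := (x - y) ⬝ᵥ (w - y)
  set B := (w - y) ⬝ᵥ (w - y)
  have hB : 0 ≤ B := sum_nonneg fun i _ => mul_self_nonneg _
  -- moving from `y` towards `w` by `θ = A / (A + B)` would bring it closer to `x`
  set θ := A / (A + B)
  have hθ : θ ∈ Set.Icc (0 : ℝ) 1 :=
    ⟨div_nonneg hA.le (by linarith), div_le_one_of_le₀ (by linarith) (by linarith)⟩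
  have hexp : ∑ i, (x i - (y + θ • (w - y)) i) ^ 2 =
      ∑ i, (x i - y i) ^ 2 - 2 * θ * A + θ ^ 2 * B := by
    simp only [A, B, dotProduct, mul_sum, ← sum_sub_distrib, ← sum_add_distrib]
    refine sum_congr rfl fun i _ => ?_
    simp only [Pi.add_apply, Pi.smul_apply, Pi.sub_apply, smul_eq_mul]
    ring
  have hθA : θ * B ≤ A := by
    rw [div_mul_eq_mul_div, div_le_iff₀ (by linarith)]
    nlinarith
  have hmin' := hexp ▸ hmin _ (hS.add_smul_sub_mem hy hw hθ)
  have hθpos : 0 < θ := div_pos hA (by linarith)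
  nlinarith

lemma sum_sq_sub_eq {ι : Type*} [Fintype ι] (x y u : ι → ℝ) :
    ∑ i, (u i - x i) ^ 2 = ∑ i, ((x - y) i - x i) ^ 2 + ∑ i, (u i - (x - y) i) ^ 2
      - 2 * y ⬝ᵥ u + 2 * (x - y) ⬝ᵥ y := by
  simp only [dotProduct, mul_sum, ← sum_sub_distrib, ← sum_add_distrib]
  exact sum_congr rfl fun i _ => by simp only [Pi.sub_apply]; ring

lemma eq_of_sum_sq_sub_nonpos {ι : Type*} [Fintype ι] {u v : ι → ℝ}
    (h : ∑ i, (u i - v i) ^ 2 ≤ 0) : u = v := by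
  have h0 := (sum_eq_zero_iff_of_nonneg fun i _ => sq_nonneg (u i - v i)).1
    (h.antisymm (sum_nonneg fun i _ => sq_nonneg _))
  exact funext fun i => sub_eq_zero.1 (pow_eq_zero_iff two_ne_zero |>.1 (h0 i (mem_univ i)))

theorem stmt3_general (p q : ℝ≥0∞) [Fact (1 ≤ p)] [Fact (1 ≤ q)] (hpq : 1/p + 1/q = 1)
    {d B : ℕ} (G : Fin B → Finset (Fin d)) (hcover : ∀ j : Fin d, ∃ r, j ∈ G r)
    (lam : ℝ) (hlam : 0 < lam) (x y : Fin d → ℝ)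
    (hyK : ∀ r, grpNorm q (G r) y ≤ lam)
    (hymin : ∀ z : Fin d → ℝ, (∀ r, grpNorm q (G r) z ≤ lam) →
      ∑ j, (x j - y j) ^ 2 ≤ ∑ j, (x j - z j) ^ 2) :
    (∀ u : Fin d → ℝ,
        (1/2) * ∑ j, ((x - y) j - x j) ^ 2 + lam * Omega p G (x - y) ≤
          (1/2) * ∑ j, (u j - x j) ^ 2 + lam * Omega p G u) ∧
    (∀ u : Fin d → ℝ,
        (1/2) * ∑ j, (u j - x j) ^ 2 + lam * Omega p G u =
          (1/2) * ∑ j, ((x - y) j - x j) ^ 2 + lam * Omega p G (x - y) → u = x - y) := by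
  have : p.HolderConjugate q := ENNReal.holderConjugate_iff.2 (by simpa only [one_div] using hpq)
  have hlower (u : Fin d → ℝ) : y ⬝ᵥ u ≤ lam * Omega p G u :=
    dotProduct_le_mul_Omega hcover hlam hyK u
  have hupper : lam * Omega p G (x - y) ≤ (x - y) ⬝ᵥ y :=
    mul_Omega_le_of_dotProduct_le hlam fun w hw => by
      simpa [dotProduct_sub] using
        dotProduct_sub_nonpos_of_forall_le (convex_dualBall q G lam) hyK hymin hw
  have hgrowth (u : Fin d → ℝ) :
      (1/2) * ∑ j, ((x - y) j - x j) ^ 2 + lam * Omega p G (x - y) +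
          (1/2) * ∑ j, (u j - (x - y) j) ^ 2 ≤
        (1/2) * ∑ j, (u j - x j) ^ 2 + lam * Omega p G u := by
    linarith [sum_sq_sub_eq x y u, hlower u]
  refine ⟨fun u => ?_, fun u hu => eq_of_sum_sq_sub_nonpos ?_⟩
  · linarith [hgrowth u, sum_nonneg fun j (_ : j ∈ univ) => sq_nonneg (u j - (x - y) j)]
  · linarith [hgrowth u]

/-- The proximity operator of `λ Ω^G_p` is the identity minus the projection onto `λK`:
if `y` is the Euclidean projection of `x` onto `λK`, then `x - y` is the (unique) minimizer
of `u ↦ (1/2)‖u - x‖² + λ Ω^G_p(u)`. -/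
theorem stmt3 (p q : ℝ≥0∞) [Fact (1 ≤ p)] [Fact (1 ≤ q)] (hp : 1 < p) (hpq : 1/p + 1/q = 1)
    {d B : ℕ} (G : Fin B → Finset (Fin d)) (hcover : ∀ j : Fin d, ∃ r, j ∈ G r)
    (lam : ℝ) (hlam : 0 < lam) (x y : Fin d → ℝ)
    (hyK : ∀ r, grpNorm q (G r) y ≤ lam)
    (hymin : ∀ z : Fin d → ℝ, (∀ r, grpNorm q (G r) z ≤ lam) →
      ∑ j, (x j - y j) ^ 2 ≤ ∑ j, (x j - z j) ^ 2) :
    (∀ u : Fin d → ℝ,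
        (1/2) * ∑ j, ((x - y) j - x j) ^ 2 + lam * Omega p G (x - y) ≤
          (1/2) * ∑ j, (u j - x j) ^ 2 + lam * Omega p G u) ∧
    (∀ u : Fin d → ℝ,
        (1/2) * ∑ j, (u j - x j) ^ 2 + lam * Omega p G u =
          (1/2) * ∑ j, ((x - y) j - x j) ^ 2 + lam * Omega p G (x - y) → u = x - y) :=
  stmt3_general p q hpq G hcover lam hlam x y hyK hymin
end

section
/- Active set reduction for the projection: let G = {G_1,...,G_B} be groups, q ∈ [1,∞], λ > 0, K = ∩_{r} { x : ‖P_{G_r} x‖_q ≤ λ } and, for w ∈ ℝ^d, let Ĝ = { G_r : ‖P_{G_r} w‖_q > λ }. Then π_K(w) = π_{K̂}(w), where K̂ = ∩_{G∈Ĝ} { x : ‖P_G x‖_q ≤ λ } (with K̂ = ℝ^d if Ĝ is empty, in which case π_K(w) = w). -/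
/-!
If `z` is the projection of `w` onto the active constraints only, then `|z j| ≤ |w j|` for
every coordinate: otherwise replacing `z j` by `w j` keeps all group norms from growing and
moves strictly closer to `w`. Hence every inactive constraint, which `w` satisfies, holds at `z`
as well, so `z ∈ K`. Then `y` and `z` both minimize the distance to `w` over the convex set of
active constraints, and strict convexity of the squared distance makes them equal.
-/

open scoped Classical ENNReal NNReal

open Set

lemma pNormOn_mono (p : ℝ≥0∞) [Fact (1 ≤ p)] {ι : Type*} [Fintype ι] {a b : ι → ℝ}
    (h : ∀ i, |a i| ≤ |b i|) : pNormOn p a ≤ pNormOn p b := by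
  unfold pNormOn
  rcases eq_or_ne p ∞ with rfl | hp
  · rw [WithLp.equiv_symm_apply, PiLp.norm_toLp, PiLp.norm_toLp]
    refine pi_norm_le_iff_of_nonneg (norm_nonneg _) |>.2 fun i => ?_
    exact (h i).trans (norm_le_pi_norm b i)
  · have hp0 : 0 < p.toReal :=
      ENNReal.toReal_pos (zero_lt_one.trans_le (Fact.out : (1 : ℝ≥0∞) ≤ p)).ne' hp
    rw [PiLp.norm_eq_sum hp0, PiLp.norm_eq_sum hp0]
    gcongr with i
    exact h i

lemma grpNorm_mono {d : ℕ} (p : ℝ≥0∞) [Fact (1 ≤ p)] (G : Finset (Fin d)) {x y : Fin d → ℝ}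
    (h : ∀ j, |x j| ≤ |y j|) : grpNorm p G x ≤ grpNorm p G y :=
  pNormOn_mono p fun j => h j.1

lemma convexOn_grpNorm {d : ℕ} (p : ℝ≥0∞) [Fact (1 ≤ p)] (G : Finset (Fin d)) :
    ConvexOn ℝ univ (grpNorm p G) := by
  have := (convexOn_norm (convex_univ (E := PiLp p fun _ : {j // j ∈ G} => ℝ))).comp_linearMap
    ((WithLp.linearEquiv p ℝ ({j // j ∈ G} → ℝ)).symm.toLinearMap ∘ₗ
      LinearMap.funLeft ℝ ℝ Subtype.val)
  rwa [preimage_univ] at this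

lemma convex_setOf_forall_grpNorm_le {d : ℕ} (p : ℝ≥0∞) [Fact (1 ≤ p)] {ι : Type*}
    (G : ι → Finset (Fin d)) (P : ι → Prop) (lam : ℝ) :
    Convex ℝ {u | ∀ r, P r → grpNorm p (G r) u ≤ lam} := by
  intro x hx y hy a b ha hb hab r hr
  calc grpNorm p (G r) (a • x + b • y)
      ≤ a • grpNorm p (G r) x + b • grpNorm p (G r) y :=
        (convexOn_grpNorm p (G r)).2 (mem_univ x) (mem_univ y) ha hb hab
    _ ≤ a • lam + b • lam := by gcongr <;> [exact hx r hr; exact hy r hr]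
    _ = lam := by rw [← add_smul, hab, one_smul]

lemma strictConvexOn_sum_sq_sub {ι : Type*} [Fintype ι] (w : ι → ℝ) :
    StrictConvexOn ℝ univ fun u : ι → ℝ => ∑ j, (w j - u j) ^ 2 := by
  refine ⟨convex_univ, fun y _ z _ hyz a b ha hb hab => ?_⟩
  obtain ⟨j, hj⟩ := Function.ne_iff.1 hyz
  have hgap : 0 < ∑ i, (y i - z i) ^ 2 :=
    Finset.sum_pos' (fun i _ => sq_nonneg _) ⟨j, Finset.mem_univ j, by
      simpa [sq_pos_iff, sub_eq_zero] using hj⟩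
  have hident : a • ∑ i, (w i - y i) ^ 2 + b • ∑ i, (w i - z i) ^ 2
      = ∑ i, (w i - (a • y + b • z) i) ^ 2 + a * b * ∑ i, (y i - z i) ^ 2 := by
    obtain rfl : b = 1 - a := by linarith
    simp only [smul_eq_mul, Finset.mul_sum, ← Finset.sum_add_distrib, Pi.add_apply,
      Pi.smul_apply]
    exact Finset.sum_congr rfl fun i _ => by ring
  rw [hident]
  have := mul_pos (mul_pos ha hb) hgap
  linarith

lemma abs_le_abs_of_isMinOn_sum_sq_sub {ι : Type*} [Fintype ι] [DecidableEq ι]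
    {S : Set (ι → ℝ)} (hS : ∀ u ∈ S, ∀ v : ι → ℝ, (∀ i, |v i| ≤ |u i|) → v ∈ S)
    {w z : ι → ℝ} (hz : z ∈ S) (hmin : IsMinOn (fun u => ∑ j, (w j - u j) ^ 2) S z) (j : ι) :
    |z j| ≤ |w j| := by
  by_contra! hj
  have hshrink : ∀ i, |Function.update z j (w j) i| ≤ |z i| := by
    intro i
    rcases eq_or_ne i j with rfl | hi
    · simpa using hj.le
    · simp [hi]
  have hcloser : ∑ i, (w i - Function.update z j (w j) i) ^ 2 < ∑ i, (w i - z i) ^ 2 := by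
    refine Finset.sum_lt_sum (fun i _ => ?_) ⟨j, Finset.mem_univ j, ?_⟩
    · rcases eq_or_ne i j with rfl | hi
      · simpa using sq_nonneg _
      · simp [hi]
    · have : w j ≠ z j := fun h => hj.ne (h ▸ rfl)
      simpa [sq_pos_iff, sub_eq_zero] using this
  exact (isMinOn_iff.1 hmin _ (hS z hz _ hshrink)).not_gt hcloser

theorem stmt6_general (q : ℝ≥0∞) [Fact (1 ≤ q)] {d B : ℕ} (G : Fin B → Finset (Fin d))
    (lam : ℝ) (w y z : Fin d → ℝ)
    (hyK : ∀ r, grpNorm q (G r) y ≤ lam)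
    (hymin : ∀ u : Fin d → ℝ, (∀ r, grpNorm q (G r) u ≤ lam) →
      ∑ j, (w j - y j) ^ 2 ≤ ∑ j, (w j - u j) ^ 2)
    (hzK : ∀ r, lam < grpNorm q (G r) w → grpNorm q (G r) z ≤ lam)
    (hzmin : ∀ u : Fin d → ℝ, (∀ r, lam < grpNorm q (G r) w → grpNorm q (G r) u ≤ lam) →
      ∑ j, (w j - z j) ^ 2 ≤ ∑ j, (w j - u j) ^ 2) :
    y = z := by
  set Khat := {u : Fin d → ℝ | ∀ r, lam < grpNorm q (G r) w → grpNorm q (G r) u ≤ lam}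
  have hzmin' : IsMinOn (fun u => ∑ j, (w j - u j) ^ 2) Khat z := isMinOn_iff.2 hzmin
  have hz_abs : ∀ j, |z j| ≤ |w j| :=
    abs_le_abs_of_isMinOn_sum_sq_sub (S := Khat)
      (fun u hu v hvu r hr => (grpNorm_mono q (G r) hvu).trans (hu r hr)) hzK hzmin'
  have hzK_all : ∀ r, grpNorm q (G r) z ≤ lam := fun r =>
    (le_or_gt (grpNorm q (G r) w) lam).elim (grpNorm_mono q (G r) hz_abs).trans (hzK r)
  have hymin' : IsMinOn (fun u => ∑ j, (w j - u j) ^ 2) Khat y :=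
    isMinOn_iff.2 fun u hu => (hymin z hzK_all).trans (hzmin u hu)
  exact ((strictConvexOn_sum_sq_sub w).subset (subset_univ _)
    (convex_setOf_forall_grpNorm_le q G _ lam)).eq_of_isMinOn hymin' hzmin'
    (fun r _ => hyK r) hzK

/-- Active set reduction: the projection of `w` onto the intersection of all the group
constraints coincides with the projection onto the intersection of the active constraints
`Ĝ = { r : ‖P_{G_r} w‖_q > λ }` only. -/
theorem stmt6 (q : ℝ≥0∞) [Fact (1 ≤ q)] {d B : ℕ} (G : Fin B → Finset (Fin d))
    (lam : ℝ) (hlam : 0 < lam) (w y z : Fin d → ℝ)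
    (hyK : ∀ r, grpNorm q (G r) y ≤ lam)
    (hymin : ∀ u : Fin d → ℝ, (∀ r, grpNorm q (G r) u ≤ lam) →
      ∑ j, (w j - y j) ^ 2 ≤ ∑ j, (w j - u j) ^ 2)
    (hzK : ∀ r, lam < grpNorm q (G r) w → grpNorm q (G r) z ≤ lam)
    (hzmin : ∀ u : Fin d → ℝ, (∀ r, lam < grpNorm q (G r) w → grpNorm q (G r) u ≤ lam) →
      ∑ j, (w j - z j) ^ 2 ≤ ∑ j, (w j - u j) ^ 2) :
    y = z :=
  stmt6_general q G lam w y z hyK hymin hzK hzmin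
end
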